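/- Let q be an odd prime. For every positive integer b, B(2q^b) = 2. -/

import Mathlib

open Polynomial

noncomputable def Height (f : Polynomial ℤ) : ℕ :=
  f.support.sup fun i => (f.coeff i).natAbs

noncomputable def Tsum (f : Polynomial ℤ) : ℕ :=
  ∑ i ∈ f.support, (f.coeff i).natAbs

noncomputable def B (n : ℕ) : ℕ :=
  sSup {h : ℕ | ∃ f : Polynomial ℤ, f ∣ X ^ n - 1 ∧ Height f = h}

/-!
Over `ℤ`, `X ^ (2 * q ^ b) - 1 = ∏_{i ≤ b} Φ_{2q^i} Φ_{q^i}`, and a divisor of it is, up to sign,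
a product of divisors of the factors `Φ_{2q^i} Φ_{q^i}`. For `i ≥ 1` such a divisor is `F(X^{q^(i-1)})`
for one of `F = 1, Φ_q, Φ_{2q}, Φ_q Φ_{2q} = Φ_q(X²)`, up to sign; each of these has coefficients in
`{-1, 0, 1}` and exponents pairwise incongruent mod `q`. Multiplying such an `F` by a polynomial in
`X ^ q` never adds two coefficients, so the product over `i ≥ 1` has height at most `1`, and the
remaining factor divides `X² - 1 = (X + 1)(X - 1)`, which at most doubles the height. The bound is
attained by `(X + 1) Φ_q`, whose coefficient of `X` is `2`.
-/

open Finset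

theorem exists_associated_prod_of_dvd_prod {ι α : Type*} [CommMonoid α] [DecompositionMonoid α]
    [DecidableEq ι] {s : Finset ι} {g : ι → α} {f : α} (h : f ∣ ∏ i ∈ s, g i) :
    ∃ d : ι → α, (∀ i, d i ∣ g i) ∧ Associated f (∏ i ∈ s, d i) := by
  induction s using Finset.induction_on generalizing f with
  | empty =>
    refine ⟨fun _ => 1, fun _ => one_dvd _, ?_⟩
    simpa [associated_one_iff_isUnit] using isUnit_of_dvd_one (by simpa using h)
  | @insert a s ha ih =>
    rw [prod_insert ha] at h
    obtain ⟨x, y, hx, hy, rfl⟩ := exists_dvd_and_dvd_of_dvd_mul h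
    obtain ⟨d, hd, hyd⟩ := ih hy
    refine ⟨Function.update d a x, fun i => ?_, ?_⟩
    · rcases eq_or_ne i a with rfl | hi
      · simpa using hx
      · simpa [hi] using hd i
    · rw [prod_insert ha, Function.update_self,
        prod_congr rfl fun i hi => Function.update_of_ne (ne_of_mem_of_not_mem hi ha) _ _]
      exact (Associated.refl x).mul_mul hyd

theorem associated_of_dvd_mul_of_irreducible {α : Type*} [CommMonoid α] [DecompositionMonoid α]
    {p r a : α} (hp : Irreducible p) (hr : Irreducible r) (h : a ∣ p * r) :
    Associated a 1 ∨ Associated a p ∨ Associated a r ∨ Associated a (p * r) := by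
  have dvd_irreducible : ∀ {z w : α}, Irreducible w → z ∣ w → Associated z 1 ∨ Associated z w :=
    fun hw hz => (hw.dvd_iff.mp hz).imp associated_one_iff_isUnit.mpr Associated.symm
  obtain ⟨x, y, hx, hy, rfl⟩ := exists_dvd_and_dvd_of_dvd_mul h
  rcases dvd_irreducible hp hx with hx | hx <;> rcases dvd_irreducible hr hy with hy | hy
  · exact .inl (by simpa using hx.mul_mul hy)
  · exact .inr <| .inr <| .inl (by simpa using hx.mul_mul hy)
  · exact .inr <| .inl (by simpa using hx.mul_mul hy)
  · exact .inr <| .inr <| .inr (hx.mul_mul hy)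

namespace Polynomial

theorem Int.eq_or_eq_neg_of_associated {f g : ℤ[X]} (h : Associated f g) : g = f ∨ g = -f := by
  obtain ⟨u, rfl⟩ := h
  obtain ⟨r, hr, hu⟩ := Polynomial.isUnit_iff.mp u.isUnit
  rcases Int.isUnit_iff.mp hr with rfl | rfl <;> simp [← hu]

end Polynomial

theorem natAbs_coeff_le_height (f : ℤ[X]) (n : ℕ) : (f.coeff n).natAbs ≤ Height f := by
  by_cases hn : n ∈ f.support
  · exact le_sup (f := fun i => (f.coeff i).natAbs) hn
  · simp [notMem_support_iff.mp hn]

theorem height_le_iff {f : ℤ[X]} {c : ℕ} : Height f ≤ c ↔ ∀ n, (f.coeff n).natAbs ≤ c :=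
  ⟨fun h n => (natAbs_coeff_le_height f n).trans h, fun h => Finset.sup_le fun n _ => h n⟩

@[simp]
theorem height_neg (f : ℤ[X]) : Height (-f) = Height f := by
  simp [Height]

theorem height_eq_of_associated {f g : ℤ[X]} (h : Associated f g) : Height f = Height g := by
  rcases Int.eq_or_eq_neg_of_associated h with rfl | rfl <;> simp

theorem height_expand_le {k : ℕ} (hk : 0 < k) (f : ℤ[X]) : Height (expand ℤ k f) ≤ Height f := by
  refine height_le_iff.mpr fun n => ?_
  rw [coeff_expand hk]
  split_ifs
  · exact natAbs_coeff_le_height f _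
  · simp

theorem height_X_pow_add_C_mul_le (k : ℕ) (c : ℤ) (W : ℤ[X]) :
    Height ((X ^ k + C c) * W) ≤ (1 + c.natAbs) * Height W := by
  refine height_le_iff.mpr fun n => ?_
  rw [add_mul, coeff_add, mul_comm (X ^ k), coeff_mul_X_pow', coeff_C_mul, add_mul, one_mul]
  refine (Int.natAbs_add_le _ _).trans (Nat.add_le_add ?_ ?_)
  · split_ifs
    · exact natAbs_coeff_le_height W _
    · simp
  · rw [Int.natAbs_mul]
    exact Nat.mul_le_mul_left _ (natAbs_coeff_le_height W n)

theorem height_one : Height 1 = 1 :=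
  le_antisymm (height_le_iff.mpr fun n => by rw [coeff_one]; split_ifs <;> simp)
    (by simpa using natAbs_coeff_le_height 1 0)

theorem height_mul_expand_le {k : ℕ} (hk : 0 < k) {A : ℤ[X]}
    (hA : Set.InjOn (· % k) (A.support : Set ℕ)) (V : ℤ[X]) :
    Height (A * expand ℤ k V) ≤ Height A * Height V := by
  refine height_le_iff.mpr fun N => ?_
  set term : ℕ × ℕ → ℤ := fun x => A.coeff x.1 * (expand ℤ k V).coeff x.2
  -- a nonzero term has `k ∣ x.2`, so `x.1 ≡ N [MOD k]`, which pins down `x.1` on the support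
  have residue : ∀ x ∈ antidiagonal N, term x ≠ 0 → x.1 ∈ A.support ∧ x.1 % k = N % k := by
    rintro ⟨i, j⟩ hx hx0
    rw [HasAntidiagonal.mem_antidiagonal] at hx
    have hkj : k ∣ j := by
      by_contra hkj
      simp [term, coeff_expand hk, hkj] at hx0
    refine ⟨mem_support_iff.mpr (left_ne_zero_of_mul hx0), ?_⟩
    obtain ⟨c, rfl⟩ := hkj
    simp [← hx]
  rw [coeff_mul]
  by_cases h : ∃ x ∈ antidiagonal N, term x ≠ 0
  · obtain ⟨x, hx, hx0⟩ := h
    rw [sum_eq_single_of_mem x hx fun y hy hyx => by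
      by_contra hy0
      obtain ⟨hyA, hyN⟩ := residue y hy hy0
      obtain ⟨hxA, hxN⟩ := residue x hx hx0
      have h1 : y.1 = x.1 := hA hyA hxA (hyN.trans hxN.symm)
      rw [HasAntidiagonal.mem_antidiagonal] at hx hy
      exact hyx (Prod.ext h1 (by omega))]
    rw [Int.natAbs_mul]
    exact Nat.mul_le_mul (natAbs_coeff_le_height A _)
      ((natAbs_coeff_le_height _ _).trans (height_expand_le hk V))
  · push Not at h
    rw [sum_eq_zero h, Int.natAbs_zero]
    exact Nat.zero_le _

theorem height_prod_expand_le {k : ℕ} (hk : 0 < k) (a : ℕ → ℤ[X])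
    (ha : ∀ i, Set.InjOn (· % k) ((a i).support : Set ℕ)) (n : ℕ) :
    Height (∏ i ∈ range n, expand ℤ (k ^ i) (a i)) ≤ ∏ i ∈ range n, Height (a i) := by
  induction n generalizing a with
  | zero => simp [height_one]
  | succ n ih =>
    have hexpand : ∏ i ∈ range n, expand ℤ (k ^ (i + 1)) (a (i + 1)) =
        expand ℤ k (∏ i ∈ range n, expand ℤ (k ^ i) (a (i + 1))) := by
      simp only [map_prod, pow_succ', expand_mul]
    rw [prod_range_succ', prod_range_succ', hexpand, pow_zero, expand_one, mul_comm,
      mul_comm (∏ i ∈ range n, _)]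
    exact (height_mul_expand_le hk (ha 0) _).trans
      (Nat.mul_le_mul_left _ (ih (fun i => a (i + 1)) fun i => ha (i + 1)))

theorem expand_prime_pow_cyclotomic {p n : ℕ} (hp : p.Prime) (hpn : p ∣ n) (R : Type*)
    [CommRing R] (i : ℕ) : expand R (p ^ i) (cyclotomic n R) = cyclotomic (n * p ^ i) R := by
  induction i with
  | zero => simp
  | succ i ih =>
    rw [pow_succ', expand_mul, ih, cyclotomic_expand_eq_cyclotomic hp (hpn.mul_right _)]
    ring_nf

theorem X_pow_two_mul_prime_pow_sub_one_eq_prod {q : ℕ} (hq : q.Prime) (hodd : Odd q)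
    (R : Type*) [CommRing R] (b : ℕ) :
    (X ^ (2 * q ^ b) - 1 : R[X]) =
      ∏ i ∈ range (b + 1), cyclotomic (q ^ i * 2) R * cyclotomic (q ^ i) R := by
  have hodd_pow : ∀ i, ¬ 2 ∣ q ^ i := fun i => by
    simpa [← even_iff_two_dvd, Nat.not_even_iff_odd] using hodd.pow
  rw [← prod_congr rfl fun i _ => cyclotomic_expand_eq_cyclotomic_mul Nat.prime_two
      (hodd_pow i) R, ← map_prod, ← Nat.prod_divisors_prime_pow (f := fun d => cyclotomic d R) hq,
    prod_cyclotomic_eq_X_pow_sub_one (pow_pos hq.pos b)]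
  simp [pow_mul]

theorem coeff_sum_range_C_mul_X_pow {R : Type*} [CommSemiring R] (c : R) (n k : ℕ) :
    (∑ j ∈ range n, (C c * X) ^ j).coeff k = if k < n then c ^ k else 0 := by
  simp only [finsetSum_coeff, mul_pow, ← C_pow, coeff_C_mul_X_pow]
  rw [sum_ite_eq]
  simp

theorem cyclotomic_mul_two_of_odd_prime {q : ℕ} (hq : q.Prime) (hodd : Odd q) :
    cyclotomic (q * 2) ℤ = ∑ j ∈ range q, (C (-1) * X) ^ j := by
  have := Fact.mk hq
  have hΦ : cyclotomic q ℤ * (X - 1) = X ^ q - 1 := by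
    rw [cyclotomic_prime]; exact geom_sum_mul X q
  have hψ : (∑ j ∈ range q, (C (-1) * X) ^ j) * (X + 1) = X ^ q + 1 := by
    have h := geom_sum_mul (C (-1) * X : ℤ[X]) q
    have hc : (C (-1) : ℤ[X]) = -1 := by simp
    simp only [hc, neg_one_mul] at h ⊢
    rw [hodd.neg_pow] at h
    linear_combination -h
  have hexp : cyclotomic (q * 2) ℤ * cyclotomic q ℤ * (X - 1) * (X + 1) = X ^ (q * 2) - 1 := by
    rw [← cyclotomic_expand_eq_cyclotomic_mul Nat.prime_two
      (by simpa [← even_iff_two_dvd] using hodd) ℤ]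
    have h2 := congrArg (expand ℤ 2) hΦ
    simp only [map_mul, map_sub, map_pow, expand_X, map_one] at h2
    linear_combination h2
  have hne : cyclotomic q ℤ * (X - 1) * (X + 1) ≠ 0 :=
    mul_ne_zero (mul_ne_zero (cyclotomic_ne_zero q ℤ) (by simpa using X_sub_C_ne_zero (1 : ℤ)))
      (by simpa using X_add_C_ne_zero (1 : ℤ))
  refine mul_right_cancel₀ hne ?_
  linear_combination hexp - cyclotomic q ℤ * (X - 1) * hψ - (X ^ q + 1) * hΦ

def IsFlatMod (k : ℕ) (a : ℤ[X]) : Prop :=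
  Height a ≤ 1 ∧ Set.InjOn (· % k) (a.support : Set ℕ)

theorem IsFlatMod.neg {k : ℕ} {a : ℤ[X]} (ha : IsFlatMod k a) : IsFlatMod k (-a) := by
  simpa [IsFlatMod, support_neg] using ha

theorem isFlatMod_of_support_lt {k : ℕ} {a : ℤ[X]} (ha : Height a ≤ 1)
    (hsupp : ∀ n ∈ a.support, n < k) : IsFlatMod k a :=
  ⟨ha, fun m hm n hn hmn => by
    simpa [Nat.mod_eq_of_lt (hsupp m hm), Nat.mod_eq_of_lt (hsupp n hn)] using hmn⟩

theorem isFlatMod_one {k : ℕ} (hk : 0 < k) : IsFlatMod k 1 :=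
  isFlatMod_of_support_lt height_one.le fun n hn =>
    (le_natDegree_of_mem_supp n hn).trans_lt (by simpa using hk)

theorem isFlatMod_sum_range_C_mul_X_pow {c : ℤ} (hc : c.natAbs ≤ 1) (n : ℕ) :
    IsFlatMod n (∑ j ∈ range n, (C c * X) ^ j) := by
  refine isFlatMod_of_support_lt (height_le_iff.mpr fun k => ?_) fun k hk => ?_
  · rw [coeff_sum_range_C_mul_X_pow]
    split_ifs
    · rw [Int.natAbs_pow]; exact pow_le_one₀ (Nat.zero_le _) hc
    · simp
  · rw [mem_support_iff, coeff_sum_range_C_mul_X_pow] at hk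
    by_contra h
    exact hk (if_neg h)

theorem IsFlatMod.expand {k m : ℕ} (hm : 0 < m) (hmk : m.Coprime k) {a : ℤ[X]}
    (ha : IsFlatMod k a) : IsFlatMod k (Polynomial.expand ℤ m a) := by
  refine ⟨(height_expand_le hm a).trans ha.1, ?_⟩
  have hsupp : ∀ n ∈ (Polynomial.expand ℤ m a).support, ∃ j ∈ a.support, n = m * j := by
    intro n hn
    rw [mem_support_iff, coeff_expand hm] at hn
    split_ifs at hn with hmn
    · exact ⟨n / m, mem_support_iff.mpr hn, (Nat.mul_div_cancel' hmn).symm⟩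
    · exact absurd rfl hn
  intro x hx y hy hxy
  obtain ⟨i, hi, rfl⟩ := hsupp x hx
  obtain ⟨j, hj, rfl⟩ := hsupp y hy
  rw [ha.2 hi hj (Nat.ModEq.cancel_left_of_coprime (hmk.symm) hxy)]

theorem exists_isFlatMod_of_dvd_cyclotomic_mul {q : ℕ} (hq : q.Prime) (hodd : Odd q) (i : ℕ)
    {d : ℤ[X]} (hd : d ∣ cyclotomic (q ^ (i + 1) * 2) ℤ * cyclotomic (q ^ (i + 1)) ℤ) :
    ∃ a, IsFlatMod q a ∧ d = expand ℤ (q ^ i) a := by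
  suffices ∃ F, IsFlatMod q F ∧ Associated d (expand ℤ (q ^ i) F) by
    obtain ⟨F, hF, hdF⟩ := this
    rcases Int.eq_or_eq_neg_of_associated hdF.symm with h | h
    · exact ⟨F, hF, h⟩
    · exact ⟨-F, hF.neg, by rw [h, map_neg]⟩
  have h2q : ¬ 2 ∣ q := by simpa [← even_iff_two_dvd] using hodd
  have hψ : cyclotomic (q ^ (i + 1) * 2) ℤ = expand ℤ (q ^ i) (cyclotomic (q * 2) ℤ) := by
    rw [expand_prime_pow_cyclotomic hq (dvd_mul_right q 2)]; ring_nf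
  have hφ : cyclotomic (q ^ (i + 1)) ℤ = expand ℤ (q ^ i) (cyclotomic q ℤ) := by
    rw [expand_prime_pow_cyclotomic hq dvd_rfl, pow_succ']
  have flat_φ : IsFlatMod q (cyclotomic q ℤ) := by
    have := Fact.mk hq
    simpa [cyclotomic_prime] using isFlatMod_sum_range_C_mul_X_pow (c := 1) le_rfl q
  have flat_ψ : IsFlatMod q (cyclotomic (q * 2) ℤ) := by
    rw [cyclotomic_mul_two_of_odd_prime hq hodd]
    exact isFlatMod_sum_range_C_mul_X_pow le_rfl q
  rcases associated_of_dvd_mul_of_irreducible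
    (cyclotomic.irreducible (Nat.mul_pos (pow_pos hq.pos _) two_pos))
    (cyclotomic.irreducible (pow_pos hq.pos _)) hd with h | h | h | h
  · exact ⟨1, isFlatMod_one hq.pos, by simpa using h⟩
  · exact ⟨_, flat_ψ, hψ ▸ h⟩
  · exact ⟨_, flat_φ, hφ ▸ h⟩
  · refine ⟨expand ℤ 2 (cyclotomic q ℤ),
      flat_φ.expand two_pos (Nat.coprime_two_left.mpr hodd), ?_⟩
    rwa [cyclotomic_expand_eq_cyclotomic_mul Nat.prime_two h2q, map_mul, ← hψ, ← hφ]

theorem height_mul_le_of_dvd_cyclotomic_two_mul_one {d : ℤ[X]}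
    (hd : d ∣ cyclotomic 2 ℤ * cyclotomic 1 ℤ) (W : ℤ[X]) :
    Height (d * W) ≤ 2 * Height W := by
  have binomial : ∀ (k : ℕ) (c : ℤ), c.natAbs ≤ 1 → Height ((X ^ k + C c) * W) ≤ 2 * Height W :=
    fun k c hc => (height_X_pow_add_C_mul_le k c W).trans (by gcongr; omega)
  rcases associated_of_dvd_mul_of_irreducible (cyclotomic.irreducible two_pos)
    (cyclotomic.irreducible one_pos) hd with h | h | h | h <;>
    rw [height_eq_of_associated (h.mul_right W)]
  · simpa using binomial 0 0 (by simp)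
  · simpa using binomial 1 1 le_rfl
  · simpa [sub_eq_add_neg] using binomial 1 (-1) le_rfl
  · convert binomial 2 (-1) le_rfl using 3
    simp only [cyclotomic_two, cyclotomic_one, C_neg, C_1]
    ring

theorem height_le_two_of_dvd {q : ℕ} (hq : q.Prime) (hodd : Odd q) (b : ℕ) {f : ℤ[X]}
    (hf : f ∣ X ^ (2 * q ^ b) - 1) : Height f ≤ 2 := by
  rw [X_pow_two_mul_prime_pow_sub_one_eq_prod hq hodd] at hf
  obtain ⟨d, hd, hfd⟩ := exists_associated_prod_of_dvd_prod hf
  choose a ha hda using fun i => exists_isFlatMod_of_dvd_cyclotomic_mul hq hodd i (hd (i + 1))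
  have hd0 : d 0 ∣ cyclotomic 2 ℤ * cyclotomic 1 ℤ := by simpa using hd 0
  rw [height_eq_of_associated hfd, prod_range_succ', mul_comm]
  simp only [hda]
  calc Height (d 0 * ∏ i ∈ range b, expand ℤ (q ^ i) (a i))
      ≤ 2 * Height (∏ i ∈ range b, expand ℤ (q ^ i) (a i)) :=
        height_mul_le_of_dvd_cyclotomic_two_mul_one hd0 _
    _ ≤ 2 * ∏ i ∈ range b, Height (a i) :=
        Nat.mul_le_mul_left 2 (height_prod_expand_le hq.pos a (fun i => (ha i).2) b)
    _ ≤ 2 := by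
        simpa using Nat.mul_le_mul_left 2 (prod_le_one' fun i _ => (ha i).1)

theorem X_add_one_mul_cyclotomic_dvd {q : ℕ} (hq : q.Prime) (hodd : Odd q) {b : ℕ} (hb : 0 < b) :
    (X + 1) * cyclotomic q ℤ ∣ X ^ (2 * q ^ b) - 1 := by
  rw [X_pow_two_mul_prime_pow_sub_one_eq_prod hq hodd]
  have hsub : {0, 1} ⊆ range (b + 1) := by
    intro i; simp only [mem_insert, mem_singleton, mem_range]; omega
  refine dvd_trans ?_ (prod_dvd_prod_of_subset _ _ _ hsub)
  rw [prod_pair zero_ne_one]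
  simp only [pow_zero, pow_one, one_mul, cyclotomic_two, cyclotomic_one]
  exact Dvd.intro ((X - 1) * cyclotomic (q * 2) ℤ) (by ring)

theorem two_le_height_X_add_one_mul_cyclotomic {q : ℕ} (hq : q.Prime) :
    2 ≤ Height ((X + 1) * cyclotomic q ℤ) := by
  have := Fact.mk hq
  have hcoeff : ((X + 1) * cyclotomic q ℤ).coeff 1 = 2 := by
    simp [add_mul, coeff_X_mul, cyclotomic_prime, finsetSum_coeff, coeff_X_pow, hq.one_lt,
      hq.pos]
  have := natAbs_coeff_le_height ((X + 1) * cyclotomic q ℤ) 1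
  rwa [hcoeff] at this

theorem stmt_14 (q : ℕ) (hq : q.Prime) (hodd : Odd q)
    (b : ℕ) (hb : 0 < b) : B (2 * q ^ b) = 2 := by
  have upper : ∀ h ∈ {h : ℕ | ∃ f : Polynomial ℤ, f ∣ X ^ (2 * q ^ b) - 1 ∧ Height f = h},
      h ≤ 2 := by
    rintro _ ⟨f, hf, rfl⟩
    exact height_le_two_of_dvd hq hodd b hf
  have hdvd := X_add_one_mul_cyclotomic_dvd hq hodd hb
  exact IsGreatest.csSup_eq ⟨⟨_, hdvd, le_antisymm (upper _ ⟨_, hdvd, rfl⟩)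
    (two_le_height_X_add_one_mul_cyclotomic hq)⟩, upper⟩
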